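/- Under the multi-composite tensor method with α_t = (p+1)/(t+p+1), the iterates satisfy F(x_{t+1}) − F(x*) ≤ E_q (H_q+L_q) R^{q+1}/(t+p+1)^q + E_p (H_p+L_p) R^{p+1}/(t+p+1)^p, where E_k = (p+1)^{k+1}/(k+1)! and R = max_i ‖x_i − x*‖ (bounded by the initial distance on bounded level sets). -/

import Mathlib

/-!
Taking `y = α • x* + (1 - α) • x t` in the step bound and using convexity gives, for
`δ t = F (x t) - F x*`, the recurrence
`δ (t + 1) ≤ (1 - α) δ t + ∑ₖ cₖ (α R) ^ (k + 1)`  (`k ∈ {q, p}`).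
With `α = (p + 1) / (t + p + 1)` each rate `(p + 1) ^ (k + 1) / T ^ k`, `k ≤ p`, is a
supersolution of this recurrence, which is Bernoulli's inequality
`1 - (k + 1) / (T + 1) ≤ (T / (T + 1)) ^ (k + 1)`; since `α = 1` at `t = 0`, the
induction starts without any assumption on `δ 0`.
-/

open Set

lemma ConvexOn.sub_le_one_sub_mul_add {E : Type*} [NormedAddCommGroup E] [NormedSpace ℝ E]
    {F : E → ℝ} (hF : ConvexOn ℝ univ F) {r : ℝ → ℝ} (hr : MonotoneOn r (Ici 0))
    {x x' xs : E} {R α : ℝ} (hα0 : 0 ≤ α) (hα1 : α ≤ 1) (hx : ‖x - xs‖ ≤ R)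
    (hstep : ∀ y, F x' ≤ F y + r ‖y - x‖) :
    F x' - F xs ≤ (1 - α) * (F x - F xs) + r (α * R) := by
  have hconv : F (α • xs + (1 - α) • x) ≤ α * F xs + (1 - α) * F x :=
    hF.2 (mem_univ _) (mem_univ _) hα0 (by linarith) (by ring)
  have hdist : ‖(α • xs + (1 - α) • x) - x‖ ≤ α * R := by
    rw [show α • xs + (1 - α) • x - x = α • (xs - x) by module, norm_smul,
      Real.norm_of_nonneg hα0, norm_sub_rev]
    exact mul_le_mul_of_nonneg_left hx hα0
  have hreg := hr (norm_nonneg _) ((norm_nonneg _).trans hdist) hdist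
  linarith [hstep (α • xs + (1 - α) • x)]

lemma sub_mul_add_one_pow_le_pow_succ {p T : ℝ} (n : ℕ) (hT : 0 < T) (hnp : (n : ℝ) ≤ p) :
    (T - p) * (T + 1) ^ n ≤ T ^ (n + 1) := by
  have hT1 : 0 < T + 1 := by linarith
  have bernoulli := one_add_mul_le_pow (a := -1 / (T + 1))
    (by rw [neg_div, neg_le_neg_iff, div_le_iff₀ hT1]; linarith) (n + 1)
  have h : 1 + ((n + 1 : ℕ) : ℝ) * (-1 / (T + 1)) = (T - n) / (T + 1) := by
    push_cast; field_simp; ring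
  have h' : 1 + -1 / (T + 1) = T / (T + 1) := by field_simp; ring
  rw [h, h', div_pow, div_le_div_iff₀ hT1 (by positivity), pow_succ (T + 1),
    ← mul_assoc] at bernoulli
  calc (T - p) * (T + 1) ^ n ≤ (T - n) * (T + 1) ^ n := by gcongr
    _ ≤ T ^ (n + 1) := le_of_mul_le_mul_right bernoulli hT1

lemma one_sub_div_mul_div_pow_add_div_pow_le {p T : ℝ} (n : ℕ) (hT : 0 < T)
    (hnp : (n : ℝ) ≤ p) :
    (1 - (p + 1) / (T + 1)) * ((p + 1) ^ (n + 1) / T ^ n) + ((p + 1) / (T + 1)) ^ (n + 1)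
      ≤ (p + 1) ^ (n + 1) / (T + 1) ^ n := by
  have hT1 : 0 < T + 1 := by linarith
  have hp : 0 ≤ p := (Nat.cast_nonneg n).trans hnp
  have hfrac : (T - p) / ((T + 1) * T ^ n) ≤ T / (T + 1) ^ (n + 1) := by
    rw [div_le_div_iff₀ (by positivity) (by positivity)]
    calc (T - p) * (T + 1) ^ (n + 1) = (T - p) * (T + 1) ^ n * (T + 1) := by ring
      _ ≤ T ^ (n + 1) * (T + 1) := by gcongr; exact sub_mul_add_one_pow_le_pow_succ n hT hnp
      _ = T * ((T + 1) * T ^ n) := by ring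
  have hsplit : 1 / (T + 1) ^ n = T / (T + 1) ^ (n + 1) + 1 / (T + 1) ^ (n + 1) := by
    field_simp; ring
  calc (1 - (p + 1) / (T + 1)) * ((p + 1) ^ (n + 1) / T ^ n) + ((p + 1) / (T + 1)) ^ (n + 1)
      = (p + 1) ^ (n + 1) * ((T - p) / ((T + 1) * T ^ n) + 1 / (T + 1) ^ (n + 1)) := by
        rw [div_pow, one_sub_div hT1.ne']; field_simp; ring
    _ ≤ (p + 1) ^ (n + 1) * (T / (T + 1) ^ (n + 1) + 1 / (T + 1) ^ (n + 1)) := by gcongr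
    _ = (p + 1) ^ (n + 1) / (T + 1) ^ n := by rw [← hsplit]; ring

lemma le_rate_of_le_one_sub_mul_add {δ : ℕ → ℝ} {a b : ℝ} {q p : ℕ} (ha : 0 ≤ a)
    (hb : 0 ≤ b) (hqp : q ≤ p)
    (hrec : ∀ s : ℕ, δ (s + 1) ≤ (1 - (p + 1) / (s + p + 1 : ℝ)) * δ s
      + a * ((p + 1) / (s + p + 1 : ℝ)) ^ (q + 1) + b * ((p + 1) / (s + p + 1 : ℝ)) ^ (p + 1))
    (s : ℕ) :
    δ (s + 1) ≤ a * ((p + 1) ^ (q + 1) / (s + p + 1 : ℝ) ^ q)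
      + b * ((p + 1) ^ (p + 1) / (s + p + 1 : ℝ) ^ p) := by
  induction s with
  | zero =>
    have hp1 : (p + 1 : ℝ) ≠ 0 := by positivity
    have h := hrec 0
    simp only [Nat.cast_zero, zero_add, div_self hp1, sub_self, zero_mul, one_pow, mul_one] at h ⊢
    rw [pow_succ, mul_div_cancel_left₀ _ (pow_ne_zero _ hp1), pow_succ,
      mul_div_cancel_left₀ _ (pow_ne_zero _ hp1)]
    nlinarith
  | succ s ih =>
    set T : ℝ := s + p + 1
    have hT : 0 < T := by positivity
    have hTp : (p : ℝ) ≤ T := by simp only [T]; linarith [(s.cast_nonneg : (0 : ℝ) ≤ s)]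
    have hcast : ((s + 1 : ℕ) : ℝ) + p + 1 = T + 1 := by push_cast; ring
    have hα : 0 ≤ 1 - (p + 1) / (T + 1) := by
      rw [sub_nonneg, div_le_one (by linarith)]; linarith
    have h := hrec (s + 1)
    rw [hcast] at h ⊢
    have hq := one_sub_div_mul_div_pow_add_div_pow_le (p := p) q hT (by exact_mod_cast hqp)
    have hp := one_sub_div_mul_div_pow_add_div_pow_le (p := p) p hT le_rfl
    nlinarith [mul_le_mul_of_nonneg_left ih hα, mul_le_mul_of_nonneg_left hq ha,
      mul_le_mul_of_nonneg_left hp hb]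

theorem multi_composite_rate_general
    {E : Type*} [NormedAddCommGroup E] [NormedSpace ℝ E]
    (F : E → ℝ) (hF : ConvexOn ℝ Set.univ F)
    (xs : E)
    (q p : ℕ) (hqp : q ≤ p)
    (Lq Lp Hq Hp R : ℝ) (hLq : 0 ≤ Lq) (hLp : 0 ≤ Lp)
    (hHq : (q : ℝ) * Lq ≤ Hq) (hHp : (p : ℝ) * Lp ≤ Hp)
    (x : ℕ → E) (hR : ∀ i, ‖x i - xs‖ ≤ R)
    (hstep : ∀ t (y : E),
      F (x (t + 1)) ≤ F y + (Hq + Lq) / (q + 1).factorial * ‖y - x t‖ ^ (q + 1)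
        + (Hp + Lp) / (p + 1).factorial * ‖y - x t‖ ^ (p + 1))
    (t : ℕ) :
    F (x (t + 1)) - F xs
      ≤ (p + 1 : ℝ) ^ (q + 1) / (q + 1).factorial * (Hq + Lq) * R ^ (q + 1) / (t + p + 1 : ℝ) ^ q
        + (p + 1 : ℝ) ^ (p + 1) / (p + 1).factorial * (Hp + Lp) * R ^ (p + 1)
            / (t + p + 1 : ℝ) ^ p := by
  set cq : ℝ := (Hq + Lq) / (q + 1).factorial
  set cp : ℝ := (Hp + Lp) / (p + 1).factorial
  have hcq : 0 ≤ cq := div_nonneg (by nlinarith [q.cast_nonneg (α := ℝ)]) (by positivity)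
  have hcp : 0 ≤ cp := div_nonneg (by nlinarith [p.cast_nonneg (α := ℝ)]) (by positivity)
  have hR0 : 0 ≤ R := (norm_nonneg _).trans (hR 0)
  have hreg : MonotoneOn (fun ρ : ℝ ↦ cq * ρ ^ (q + 1) + cp * ρ ^ (p + 1)) (Ici 0) :=
    fun ρ hρ σ _ hρσ ↦ by dsimp only; gcongr
  have hrec (s : ℕ) := hF.sub_le_one_sub_mul_add hreg (x' := x (s + 1))
    (α := (p + 1) / (s + p + 1)) (by positivity)
    (div_le_one_of_le₀ (by linarith [s.cast_nonneg (α := ℝ)]) (by positivity)) (hR s)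
    fun y ↦ (hstep s y).trans_eq (add_assoc _ _ _)
  have hrate := le_rate_of_le_one_sub_mul_add (δ := fun s ↦ F (x s) - F xs)
    (mul_nonneg hcq (pow_nonneg hR0 (q + 1))) (mul_nonneg hcp (pow_nonneg hR0 (p + 1))) hqp
    (fun s ↦ (hrec s).trans_eq (by simp only [mul_pow]; ring)) t
  exact hrate.trans_eq (by simp only [cq, cp]; ring)

theorem multi_composite_rate
    {E : Type*} [NormedAddCommGroup E] [NormedSpace ℝ E]
    (F : E → ℝ) (hF : ConvexOn ℝ Set.univ F)
    (xs : E) (hxs : ∀ u, F xs ≤ F u)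
    (q p : ℕ) (hq : 1 ≤ q) (hqp : q ≤ p)
    (Lq Lp Hq Hp R : ℝ) (hLq : 0 ≤ Lq) (hLp : 0 ≤ Lp)
    (hHq : (q : ℝ) * Lq ≤ Hq) (hHp : (p : ℝ) * Lp ≤ Hp)
    (x : ℕ → E) (hR : ∀ i, ‖x i - xs‖ ≤ R)
    (hstep : ∀ t (y : E),
      F (x (t + 1)) ≤ F y + (Hq + Lq) / (q + 1).factorial * ‖y - x t‖ ^ (q + 1)
        + (Hp + Lp) / (p + 1).factorial * ‖y - x t‖ ^ (p + 1))
    (t : ℕ) :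
    F (x (t + 1)) - F xs
      ≤ (p + 1 : ℝ) ^ (q + 1) / (q + 1).factorial * (Hq + Lq) * R ^ (q + 1) / (t + p + 1 : ℝ) ^ q
        + (p + 1 : ℝ) ^ (p + 1) / (p + 1).factorial * (Hp + Lp) * R ^ (p + 1)
            / (t + p + 1 : ℝ) ^ p :=
  multi_composite_rate_general F hF xs q p hqp Lq Lp Hq Hp R hLq hLp hHq hHp x hR hstep t
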